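/- For every integer K ≥ 1 and every p with 1 ≤ p ≤ ∞, the p-norm network distance d_{D,p} restricted to K-order dissimilarity networks is a metric on the space of K-order dissimilarity networks modulo isomorphism: it is nonnegative, symmetric, satisfies the triangle inequality, and d_{D,p}(D_X,D_Y) = 0 holds if and only if D_X and D_Y are isomorphic. -/

import Mathlib

open scoped ENNReal

/-- A correspondence between node sets `X` and `Y`: a set of pairs in which every
`x : X` and every `y : Y` appears. -/
def IsCorrespondence {X Y : Type} (C : Set (X × Y)) : Prop :=
  (∀ x : X, ∃ y : Y, (x, y) ∈ C) ∧ (∀ y : Y, ∃ x : X, (x, y) ∈ C)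

/-- The rank of a tuple: the number of distinct elements appearing in it. -/
noncomputable def tupleRank {X : Type} {n : ℕ} (t : Fin n → X) : ℕ :=
  Set.ncard (Set.range t)

/-- A `K`-order network on a finite nonempty node set `X`: relationship functions
`r k : X^{k+1} → [0,1]` for `0 ≤ k ≤ K`, symmetric under permutations of the arguments,
and such that any subtuple with the same set of distinct elements as the full tuple
carries the same relationship value. -/
structure HONetwork (K : ℕ) (X : Type) [Fintype X] [Nonempty X] : Type where
  r : ∀ k : ℕ, (Fin (k + 1) → X) → ℝ
  r_nonneg : ∀ k, k ≤ K → ∀ t : Fin (k + 1) → X, 0 ≤ r k t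
  r_le_one : ∀ k, k ≤ K → ∀ t : Fin (k + 1) → X, r k t ≤ 1
  symm : ∀ k, k ≤ K → ∀ (t : Fin (k + 1) → X) (σ : Equiv.Perm (Fin (k + 1))),
    r k (t ∘ σ) = r k t
  identity : ∀ k, k ≤ K → ∀ k', k' ≤ K → ∀ (t : Fin (k + 1) → X)
    (ι : Fin (k' + 1) → Fin (k + 1)), StrictMono ι →
    Set.range (t ∘ ι) = Set.range t → r k' (t ∘ ι) = r k t

/-- The `k`-order network difference `Γ^k_{X,Y}(C)`: the largest value of
`|r_X^k(x_{0:k}) − r_Y^k(y_{0:k})|` over tuples of pairs of correspondents in `C`. -/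
noncomputable def Gamma {K : ℕ} {X Y : Type} [Fintype X] [Nonempty X] [Fintype Y] [Nonempty Y]
    (NX : HONetwork K X) (NY : HONetwork K Y) (k : ℕ) (C : Set (X × Y)) : ℝ :=
  sSup { v : ℝ | ∃ (tx : Fin (k + 1) → X) (ty : Fin (k + 1) → Y),
    (∀ i, (tx i, ty i) ∈ C) ∧ v = |NX.r k tx - NY.r k ty| }

/-- The `k`-order network distance: minimum of `Γ^k_{X,Y}(C)` over correspondences `C`. -/
noncomputable def dN {K : ℕ} {X Y : Type} [Fintype X] [Nonempty X] [Fintype Y] [Nonempty Y]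
    (k : ℕ) (NX : HONetwork K X) (NY : HONetwork K Y) : ℝ :=
  sInf { v : ℝ | ∃ C : Set (X × Y), IsCorrespondence C ∧ v = Gamma NX NY k C }

/-- The `p`-norm of a vector in `ℝ^{K+1}`, `1 ≤ p ≤ ∞`. -/
noncomputable def pNorm (K : ℕ) (p : ℝ≥0∞) [Fact (1 ≤ p)] (v : Fin (K + 1) → ℝ) : ℝ :=
  ‖(WithLp.equiv p (Fin (K + 1) → ℝ)).symm v‖

/-- The `p`-norm network distance: minimum over correspondences `C` of the `p`-norm of the
vector `(Γ^0_{X,Y}(C), …, Γ^K_{X,Y}(C))`. -/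
noncomputable def dNp {K : ℕ} {X Y : Type} [Fintype X] [Nonempty X] [Fintype Y] [Nonempty Y]
    (p : ℝ≥0∞) [Fact (1 ≤ p)] (NX : HONetwork K X) (NY : HONetwork K Y) : ℝ :=
  sInf { v : ℝ | ∃ C : Set (X × Y), IsCorrespondence C ∧
    v = pNorm K p (fun k : Fin (K + 1) => Gamma NX NY (k : ℕ) C) }

/-- Two `K`-order networks are `k`-isomorphic if a bijection of the node sets preserves the
`k`-order relationship functions. -/
def kIsomorphic {K : ℕ} {X Y : Type} [Fintype X] [Nonempty X] [Fintype Y] [Nonempty Y]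
    (k : ℕ) (NX : HONetwork K X) (NY : HONetwork K Y) : Prop :=
  ∃ φ : X ≃ Y, ∀ t : Fin (k + 1) → X, NY.r k (fun i => φ (t i)) = NX.r k t

/-- Two `K`-order networks are isomorphic if a bijection of the node sets preserves the
`k`-order relationship functions for all `0 ≤ k ≤ K`. -/
def Isomorphic {K : ℕ} {X Y : Type} [Fintype X] [Nonempty X] [Fintype Y] [Nonempty Y]
    (NX : HONetwork K X) (NY : HONetwork K Y) : Prop :=
  ∃ φ : X ≃ Y, ∀ k, k ≤ K → ∀ t : Fin (k + 1) → X, NY.r k (fun i => φ (t i)) = NX.r k t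

/-- A `K`-order dissimilarity network: a `K`-order network whose relationship functions
decompose as `r^k = d^k + ε · rank`, with nonnegative dissimilarity functions `d^k`
satisfying the order increasing property, and `0 < ε ≤ 1 − (1/K) · max d^K`. -/
structure DissimNetwork (K : ℕ) (X : Type) [Fintype X] [Nonempty X]
    extends HONetwork K X where
  dfun : ∀ k : ℕ, (Fin (k + 1) → X) → ℝ
  eps : ℝ
  dfun_nonneg : ∀ k, k ≤ K → ∀ t : Fin (k + 1) → X, 0 ≤ dfun k t
  decomp : ∀ k, k ≤ K → ∀ t : Fin (k + 1) → X,
    r k t = dfun k t + eps * (tupleRank t : ℝ)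
  order_incr : ∀ k : ℕ, k + 1 ≤ K → ∀ t : Fin (k + 2) → X,
    dfun k (fun i : Fin (k + 1) => t i.castSucc) ≤ dfun (k + 1) t
  eps_pos : 0 < eps
  eps_le : ∀ t : Fin (K + 1) → X, eps ≤ 1 - (1 / (K : ℝ)) * dfun K t

/-- A `K`-order proximity network: a `K`-order network whose relationship functions
decompose as `r^k = p^k − ε · rank`, with nonnegative proximity functions `p^k`
satisfying the order decreasing property, and `0 < ε ≤ (1/K) · min p^K`. -/
structure ProxNetwork (K : ℕ) (X : Type) [Fintype X] [Nonempty X]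
    extends HONetwork K X where
  pfun : ∀ k : ℕ, (Fin (k + 1) → X) → ℝ
  eps : ℝ
  pfun_nonneg : ∀ k, k ≤ K → ∀ t : Fin (k + 1) → X, 0 ≤ pfun k t
  decomp : ∀ k, k ≤ K → ∀ t : Fin (k + 1) → X,
    r k t = pfun k t - eps * (tupleRank t : ℝ)
  order_decr : ∀ k : ℕ, k + 1 ≤ K → ∀ t : Fin (k + 2) → X,
    pfun (k + 1) t ≤ pfun k (fun i : Fin (k + 1) => t i.castSucc)
  eps_pos : 0 < eps
  eps_le : ∀ t : Fin (K + 1) → X, eps ≤ (1 / (K : ℝ)) * pfun K t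

/-!
The distance is a minimum over the finitely many correspondences, so it is attained. Symmetry
and the triangle inequality come from inverting and composing correspondences, using the
triangle inequality for `|·|` inside each `Γ^k` and for the `p`-norm outside.

For the identity of indiscernibles, an optimal correspondence `C` of a zero distance has all
`Γ^k(C) = 0`, i.e. it preserves every relationship function. In a dissimilarity network, for
`y ≠ y'` the order increasing property and the rank term give
`r^1(y, y') = d^1(y, y') + 2ε ≥ d^0(y) + 2ε > r^0(y)`, whereas `r^1(x, x) = r^0(x)` in any
network by the identity property. Hence if `(x, y), (x, y') ∈ C` then `y = y'`, and
symmetrically, so `C` is the graph of a bijection, which is then an isomorphism.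
-/

open SetRel

section Network

variable {K : ℕ} {X : Type} [Fintype X] [Nonempty X]

lemma HONetwork.r_one_self (hK : 1 ≤ K) (N : HONetwork K X) (x : X) :
    N.r 1 ![x, x] = N.r 0 ![x] := by
  have hι : StrictMono (fun _ : Fin 1 => (0 : Fin 2)) := fun a b hab =>
    absurd (Subsingleton.elim a b) hab.ne
  refine (N.identity 1 hK 0 K.zero_le ![x, x] _ hι ?_).symm.trans (congrArg (N.r 0) ?_)
  · simp [Function.comp_def, Set.range_const]
  · funext i; simp

lemma DissimNetwork.eq_of_r_one_eq_r_zero (hK : 1 ≤ K) (D : DissimNetwork K X) {y y' : X}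
    (h : D.r 1 ![y, y'] = D.r 0 ![y]) : y = y' := by
  by_contra hne
  have hrank₀ : tupleRank ![y] = 1 := by simp [tupleRank]
  have hrank₁ : tupleRank ![y, y'] = 2 := by
    simpa [tupleRank, Matrix.range_cons] using Set.ncard_pair (Ne.symm hne)
  have hincr : D.dfun 0 ![y] ≤ D.dfun 1 ![y, y'] := by
    have hrestrict : (fun i : Fin 1 => ![y, y'] i.castSucc) = ![y] := by
      funext i; fin_cases i; rfl
    simpa only [hrestrict] using D.order_incr 0 hK ![y, y']
  rw [D.decomp 1 hK, D.decomp 0 K.zero_le, hrank₀, hrank₁] at h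
  push_cast at h
  linarith [D.eps_pos]

end Network

section Gamma

variable {K : ℕ} {X Y Z : Type} [Fintype X] [Nonempty X] [Fintype Y] [Nonempty Y]
  [Fintype Z] [Nonempty Z]

lemma Gamma_nonneg (NX : HONetwork K X) (NY : HONetwork K Y) (k : ℕ) (C : Set (X × Y)) :
    0 ≤ Gamma NX NY k C :=
  Real.sSup_nonneg (by rintro v ⟨tx, ty, -, rfl⟩; positivity)

lemma abs_sub_le_Gamma (NX : HONetwork K X) (NY : HONetwork K Y) {k : ℕ} (hk : k ≤ K)
    {C : Set (X × Y)} {tx : Fin (k + 1) → X} {ty : Fin (k + 1) → Y}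
    (h : ∀ i, (tx i, ty i) ∈ C) : |NX.r k tx - NY.r k ty| ≤ Gamma NX NY k C := by
  refine le_csSup ⟨1, ?_⟩ ⟨tx, ty, h, rfl⟩
  rintro v ⟨tx, ty, -, rfl⟩
  rw [abs_sub_le_iff]
  constructor <;> linarith [NX.r_nonneg k hk tx, NX.r_le_one k hk tx,
    NY.r_nonneg k hk ty, NY.r_le_one k hk ty]

lemma Gamma_le {NX : HONetwork K X} {NY : HONetwork K Y} {k : ℕ} {C : Set (X × Y)} {c : ℝ}
    (hc : 0 ≤ c) (h : ∀ (tx : Fin (k + 1) → X) (ty : Fin (k + 1) → Y),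
      (∀ i, (tx i, ty i) ∈ C) → |NX.r k tx - NY.r k ty| ≤ c) :
    Gamma NX NY k C ≤ c :=
  Real.sSup_le (by rintro v ⟨tx, ty, hC, rfl⟩; exact h tx ty hC) hc

def IsRelPreserving (NX : HONetwork K X) (NY : HONetwork K Y) (C : Set (X × Y)) : Prop :=
  ∀ k ≤ K, ∀ (tx : Fin (k + 1) → X) (ty : Fin (k + 1) → Y),
    (∀ i, (tx i, ty i) ∈ C) → NX.r k tx = NY.r k ty

lemma IsRelPreserving.inv {NX : HONetwork K X} {NY : HONetwork K Y} {C : Set (X × Y)}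
    (h : IsRelPreserving NX NY C) : IsRelPreserving NY NX (SetRel.inv C) :=
  fun k hk ty tx hC => (h k hk tx ty hC).symm

lemma isRelPreserving_iff_Gamma_eq_zero (NX : HONetwork K X) (NY : HONetwork K Y)
    (C : Set (X × Y)) : IsRelPreserving NX NY C ↔ ∀ k ≤ K, Gamma NX NY k C = 0 := by
  refine ⟨fun h k hk => le_antisymm ?_ (Gamma_nonneg _ _ _ _), fun h k hk tx ty hC => ?_⟩
  · exact Gamma_le le_rfl fun tx ty hC => by rw [h k hk tx ty hC, sub_self, abs_zero]
  · have := abs_sub_le_Gamma NX NY hk hC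
    rw [h k hk] at this
    exact sub_eq_zero.mp (abs_nonpos_iff.mp this)

lemma Gamma_inv (NX : HONetwork K X) (NY : HONetwork K Y) (k : ℕ) (C : Set (X × Y)) :
    Gamma NY NX k (SetRel.inv C) = Gamma NX NY k C := by
  unfold Gamma
  congr 1
  ext v
  constructor
  · rintro ⟨ty, tx, hC, rfl⟩
    exact ⟨tx, ty, hC, abs_sub_comm _ _⟩
  · rintro ⟨tx, ty, hC, rfl⟩
    exact ⟨ty, tx, hC, abs_sub_comm _ _⟩

lemma Gamma_comp_le (NX : HONetwork K X) (NZ : HONetwork K Z) (NY : HONetwork K Y)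
    {k : ℕ} (hk : k ≤ K) (C₁ : Set (X × Z)) (C₂ : Set (Z × Y)) :
    Gamma NX NY k (C₁ ○ C₂) ≤ Gamma NX NZ k C₁ + Gamma NZ NY k C₂ := by
  refine Gamma_le (add_nonneg (Gamma_nonneg _ _ _ _) (Gamma_nonneg _ _ _ _)) fun tx ty hC => ?_
  choose tz hC₁ hC₂ using hC
  calc |NX.r k tx - NY.r k ty|
      ≤ |NX.r k tx - NZ.r k tz| + |NZ.r k tz - NY.r k ty| := abs_sub_le _ _ _
    _ ≤ Gamma NX NZ k C₁ + Gamma NZ NY k C₂ :=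
        add_le_add (abs_sub_le_Gamma NX NZ hk hC₁) (abs_sub_le_Gamma NZ NY hk hC₂)

end Gamma

section Correspondence

variable {X Y Z : Type}

lemma isCorrespondence_univ [Nonempty X] [Nonempty Y] :
    IsCorrespondence (Set.univ : Set (X × Y)) :=
  ⟨fun _ => ⟨Classical.arbitrary Y, trivial⟩, fun _ => ⟨Classical.arbitrary X, trivial⟩⟩

lemma isCorrespondence_graph (φ : X ≃ Y) : IsCorrespondence (Function.graph φ) :=
  ⟨fun x => ⟨φ x, rfl⟩, fun y => ⟨φ.symm y, φ.apply_symm_apply y⟩⟩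

lemma IsCorrespondence.inv {C : Set (X × Y)} (hC : IsCorrespondence C) :
    IsCorrespondence (SetRel.inv C) :=
  ⟨hC.2, hC.1⟩

lemma IsCorrespondence.comp {C₁ : Set (X × Z)} {C₂ : Set (Z × Y)} (h₁ : IsCorrespondence C₁)
    (h₂ : IsCorrespondence C₂) : IsCorrespondence (C₁ ○ C₂) := by
  refine ⟨fun x => ?_, fun y => ?_⟩
  · obtain ⟨z, hz⟩ := h₁.1 x
    obtain ⟨y, hy⟩ := h₂.1 z
    exact ⟨y, z, hz, hy⟩
  · obtain ⟨z, hz⟩ := h₂.2 y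
    obtain ⟨x, hx⟩ := h₁.2 z
    exact ⟨x, z, hx, hz⟩

lemma IsCorrespondence.exists_equiv {C : Set (X × Y)} (hC : IsCorrespondence C)
    (hright : ∀ {x y y'}, (x, y) ∈ C → (x, y') ∈ C → y = y')
    (hleft : ∀ {x x' y}, (x, y) ∈ C → (x', y) ∈ C → x = x') :
    ∃ φ : X ≃ Y, ∀ x, (x, φ x) ∈ C := by
  choose f hf using hC.1
  have hinj : Function.Injective f := fun a b hab => hleft (hf a) (hab ▸ hf b)
  have hsurj : Function.Surjective f := fun y =>
    let ⟨x, hx⟩ := hC.2 y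
    ⟨x, hright (hf x) hx⟩
  exact ⟨Equiv.ofBijective f ⟨hinj, hsurj⟩, hf⟩

end Correspondence

section PNorm

variable {K : ℕ} {p : ℝ≥0∞} [Fact (1 ≤ p)]

lemma pNorm_eq_norm_toLp (v : Fin (K + 1) → ℝ) : pNorm K p v = ‖WithLp.toLp p v‖ := rfl

lemma pNorm_nonneg (v : Fin (K + 1) → ℝ) : 0 ≤ pNorm K p v :=
  norm_nonneg _

lemma pNorm_eq_zero_iff {v : Fin (K + 1) → ℝ} : pNorm K p v = 0 ↔ v = 0 := by
  rw [pNorm_eq_norm_toLp, norm_eq_zero, WithLp.toLp_eq_zero]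

lemma pNorm_add_le (u w : Fin (K + 1) → ℝ) : pNorm K p (u + w) ≤ pNorm K p u + pNorm K p w := by
  simpa only [pNorm_eq_norm_toLp, WithLp.toLp_add] using norm_add_le _ _

lemma pNorm_mono {u w : Fin (K + 1) → ℝ} (h : ∀ i, |u i| ≤ |w i|) :
    pNorm K p u ≤ pNorm K p w := by
  simp only [pNorm_eq_norm_toLp]
  rcases eq_or_ne p ⊤ with rfl | hp
  · rw [PiLp.norm_eq_ciSup, PiLp.norm_eq_ciSup]
    exact ciSup_mono (Set.finite_range _).bddAbove fun i => by simpa using h i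
  · have hp₀ : 0 < p.toReal :=
      ENNReal.toReal_pos (zero_lt_one.trans_le Fact.out).ne' hp
    rw [PiLp.norm_eq_sum hp₀, PiLp.norm_eq_sum hp₀]
    gcongr with i
    simpa using h i

end PNorm

section Distance

variable {K : ℕ} {X Y Z : Type} [Fintype X] [Nonempty X] [Fintype Y] [Nonempty Y]
  [Fintype Z] [Nonempty Z] (p : ℝ≥0∞) [Fact (1 ≤ p)]

lemma dNp_le (NX : HONetwork K X) (NY : HONetwork K Y) {C : Set (X × Y)}
    (hC : IsCorrespondence C) :
    dNp p NX NY ≤ pNorm K p (fun k : Fin (K + 1) => Gamma NX NY k C) :=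
  csInf_le ⟨0, by rintro v ⟨C, -, rfl⟩; exact pNorm_nonneg _⟩ ⟨C, hC, rfl⟩

lemma exists_isCorrespondence_dNp_eq (NX : HONetwork K X) (NY : HONetwork K Y) :
    ∃ C : Set (X × Y), IsCorrespondence C ∧
      dNp p NX NY = pNorm K p (fun k : Fin (K + 1) => Gamma NX NY k C) := by
  let values := {v : ℝ | ∃ C : Set (X × Y), IsCorrespondence C ∧
    v = pNorm K p (fun k : Fin (K + 1) => Gamma NX NY k C)}
  have hne : values.Nonempty := ⟨_, Set.univ, isCorrespondence_univ, rfl⟩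
  have hfin : values.Finite :=
    (Set.finite_range fun C : Set (X × Y) => pNorm K p fun k : Fin (K + 1) => Gamma NX NY k C
      ).subset fun _ ⟨C, _, hv⟩ => ⟨C, hv.symm⟩
  exact hne.csInf_mem hfin

lemma dNp_nonneg (NX : HONetwork K X) (NY : HONetwork K Y) : 0 ≤ dNp p NX NY := by
  obtain ⟨C, -, hC⟩ := exists_isCorrespondence_dNp_eq p NX NY
  rw [hC]
  exact pNorm_nonneg _

lemma dNp_le_dNp_swap (NX : HONetwork K X) (NY : HONetwork K Y) :
    dNp p NX NY ≤ dNp p NY NX := by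
  obtain ⟨C, hC, hopt⟩ := exists_isCorrespondence_dNp_eq p NY NX
  simpa only [hopt, Gamma_inv] using dNp_le p NX NY hC.inv

lemma dNp_comm (NX : HONetwork K X) (NY : HONetwork K Y) : dNp p NX NY = dNp p NY NX :=
  le_antisymm (dNp_le_dNp_swap p NX NY) (dNp_le_dNp_swap p NY NX)

lemma dNp_triangle (NX : HONetwork K X) (NZ : HONetwork K Z) (NY : HONetwork K Y) :
    dNp p NX NY ≤ dNp p NX NZ + dNp p NZ NY := by
  obtain ⟨C₁, hC₁, hopt₁⟩ := exists_isCorrespondence_dNp_eq p NX NZ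
  obtain ⟨C₂, hC₂, hopt₂⟩ := exists_isCorrespondence_dNp_eq p NZ NY
  calc dNp p NX NY ≤ pNorm K p (fun k : Fin (K + 1) => Gamma NX NY k (C₁ ○ C₂)) :=
        dNp_le p NX NY (hC₁.comp hC₂)
    _ ≤ pNorm K p ((fun k : Fin (K + 1) => Gamma NX NZ k C₁) +
          fun k : Fin (K + 1) => Gamma NZ NY k C₂) := by
        refine pNorm_mono fun k => ?_
        rw [Pi.add_apply, abs_of_nonneg (Gamma_nonneg _ _ _ _),
          abs_of_nonneg (add_nonneg (Gamma_nonneg _ _ _ _) (Gamma_nonneg _ _ _ _))]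
        exact Gamma_comp_le NX NZ NY k.is_le C₁ C₂
    _ ≤ dNp p NX NZ + dNp p NZ NY := hopt₁ ▸ hopt₂ ▸ pNorm_add_le _ _

lemma dNp_eq_zero_iff_exists_isRelPreserving (NX : HONetwork K X) (NY : HONetwork K Y) :
    dNp p NX NY = 0 ↔ ∃ C : Set (X × Y), IsCorrespondence C ∧ IsRelPreserving NX NY C := by
  simp only [isRelPreserving_iff_Gamma_eq_zero]
  constructor
  · obtain ⟨C, hC, hopt⟩ := exists_isCorrespondence_dNp_eq p NX NY
    rw [hopt, pNorm_eq_zero_iff]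
    exact fun h => ⟨C, hC, fun k hk => congrFun h ⟨k, Nat.lt_succ_of_le hk⟩⟩
  · rintro ⟨C, hC, h⟩
    refine le_antisymm ?_ (dNp_nonneg p NX NY)
    refine (dNp_le p NX NY hC).trans_eq (pNorm_eq_zero_iff.mpr ?_)
    exact funext fun k => h k k.is_le

end Distance

section Isomorphism

variable {K : ℕ} {X Y : Type} [Fintype X] [Nonempty X] [Fintype Y] [Nonempty Y]

lemma IsRelPreserving.right_unique (hK : 1 ≤ K) {NX : HONetwork K X} {DY : DissimNetwork K Y}
    {C : Set (X × Y)} (hC : IsRelPreserving NX DY.toHONetwork C) {x : X} {y y' : Y}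
    (hy : (x, y) ∈ C) (hy' : (x, y') ∈ C) : y = y' := by
  refine DY.eq_of_r_one_eq_r_zero hK ?_
  calc DY.r 1 ![y, y'] = NX.r 1 ![x, x] :=
        (hC 1 hK ![x, x] ![y, y'] (Fin.forall_fin_two.mpr ⟨hy, hy'⟩)).symm
    _ = NX.r 0 ![x] := NX.r_one_self hK x
    _ = DY.r 0 ![y] := hC 0 K.zero_le ![x] ![y] (Fin.forall_fin_one.mpr hy)

lemma isomorphic_of_isRelPreserving (hK : 1 ≤ K) {DX : DissimNetwork K X}
    {DY : DissimNetwork K Y} {C : Set (X × Y)} (hcorr : IsCorrespondence C)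
    (hC : IsRelPreserving DX.toHONetwork DY.toHONetwork C) :
    Isomorphic DX.toHONetwork DY.toHONetwork := by
  obtain ⟨φ, hφ⟩ := hcorr.exists_equiv (hC.right_unique hK)
    fun hx hx' => hC.inv.right_unique hK hx hx'
  exact ⟨φ, fun k hk t => (hC k hk t _ fun i => hφ (t i)).symm⟩

lemma isRelPreserving_graph {NX : HONetwork K X} {NY : HONetwork K Y} (φ : X ≃ Y)
    (hφ : ∀ k ≤ K, ∀ t : Fin (k + 1) → X, NY.r k (fun i => φ (t i)) = NX.r k t) :
    IsRelPreserving NX NY (Function.graph φ) := by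
  intro k hk tx ty hC
  obtain rfl : ty = fun i => φ (tx i) := funext fun i => (hC i).symm
  exact (hφ k hk tx).symm

end Isomorphism

/-- for `K ≥ 1` and `1 ≤ p ≤ ∞`, the `p`-norm network distance restricted to
`K`-order dissimilarity networks is a metric modulo isomorphism. -/
theorem dDp_metric (K : ℕ) (hK : 1 ≤ K) (p : ℝ≥0∞) [Fact (1 ≤ p)]
    (X Y Z : Type) [Fintype X] [Nonempty X] [Fintype Y] [Nonempty Y] [Fintype Z] [Nonempty Z]
    (DX : DissimNetwork K X) (DY : DissimNetwork K Y) (DZ : DissimNetwork K Z) :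
    0 ≤ dNp p DX.toHONetwork DY.toHONetwork ∧
    dNp p DX.toHONetwork DY.toHONetwork = dNp p DY.toHONetwork DX.toHONetwork ∧
    dNp p DX.toHONetwork DY.toHONetwork ≤
      dNp p DX.toHONetwork DZ.toHONetwork + dNp p DZ.toHONetwork DY.toHONetwork ∧
    (dNp p DX.toHONetwork DY.toHONetwork = 0 ↔
      Isomorphic DX.toHONetwork DY.toHONetwork) := by
  refine ⟨dNp_nonneg p _ _, dNp_comm p _ _, dNp_triangle p _ _ _, ?_⟩
  rw [dNp_eq_zero_iff_exists_isRelPreserving]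
  constructor
  · rintro ⟨C, hcorr, hC⟩
    exact isomorphic_of_isRelPreserving hK hcorr hC
  · rintro ⟨φ, hφ⟩
    exact ⟨Function.graph φ, isCorrespondence_graph φ, isRelPreserving_graph φ hφ⟩
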